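/- arXiv:2605.22261 — 2 statements merged into one kernel-verified Lean document; each statement's English description precedes it below -/
import Mathlib

section
/- Let F be a finite field with q elements, and let K ≥ 3, 0 ≤ T ≤ K−3, 1 ≤ U ≤ K−1 with U ≤ T+1, and L ≥ 1. Then there exists no two-round DSA scheme with input length L that simultaneously satisfies the correctness constraint and the security constraint with collusion parameter T. (Infeasibility part of the main theorem: the optimal rate region is empty when U ≤ T+1.) -/
/-!
Fix a key realisation `z` of positive probability, a user `u`, a set `U₂ ∋ u` of `U` users
and two more users `a ≠ b`; put `𝒰₁' = U₂ ∪ {b}` and `𝒰₁ = 𝒰₁' ∪ {a}`. The input profiles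
`w = δ eₐ - δ e_b` and `0` agree on `U₂` and both sum to `0` over `𝒰₁`, but sum to `-δ` and `0`
over `𝒰₁'`. Security for `𝒰₁` against the colluders `U₂ \ {u}` (at most `U - 1 ≤ T` of them)
says that the first-round messages produced by `(w, z)` occur with positive probability also
together with the input `0` and the same data `(W_k, Z_k)_{k ∈ U₂}`. On that event user `u`
decoding `𝒰₁'` with survivors `U₂` has the same view as under `(w, z)`, so correctness forces
`-δ = 0`.
-/

open MeasureTheory Finset
open scoped ENNReal

/-- Two (discrete) random tuples `f` and `g` are statistically independent:
the joint law of `(f, g)` is the product of the marginal laws, expressed pointwise. -/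
def IndepRV {Ω A B : Type*} [MeasurableSpace Ω] (P : Measure Ω)
    (f : Ω → A) (g : Ω → B) : Prop :=
  ∀ (a : A) (b : B), P (f ⁻¹' {a} ∩ g ⁻¹' {b}) = P (f ⁻¹' {a}) * P (g ⁻¹' {b})

/-- A finite family of (discrete) random variables is mutually independent:
the joint law factorizes as the product of the marginals, expressed pointwise. -/
def iIndepRV {Ω ι : Type*} [Fintype ι] {A : ι → Type*} [MeasurableSpace Ω]
    (P : Measure Ω) (f : ∀ i, Ω → A i) : Prop :=
  ∀ a : ∀ i, A i, P (⋂ i, f i ⁻¹' {a i}) = ∏ i, P (f i ⁻¹' {a i})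

/-- Conditional independence of two (discrete) random tuples `f` and `g` given the
σ-algebra generated by a third (discrete) random tuple `h`, expressed pointwise:
`P(f = a, g = b | h = c) = P(f = a | h = c) * P(g = b | h = c)` for every `a`, `b`, `c`,
in a multiplied-out form that avoids division by zero. -/
def CondIndepRV {Ω A B C : Type*} [MeasurableSpace Ω] (P : Measure Ω)
    (f : Ω → A) (g : Ω → B) (h : Ω → C) : Prop :=
  ∀ (a : A) (b : B) (c : C),
    P (f ⁻¹' {a} ∩ g ⁻¹' {b} ∩ h ⁻¹' {c}) * P (h ⁻¹' {c}) =
      P (f ⁻¹' {a} ∩ h ⁻¹' {c}) * P (g ⁻¹' {b} ∩ h ⁻¹' {c})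

/-- A random variable valued in a finite type is uniformly distributed. -/
def UniformRV {Ω A : Type*} [Fintype A] [MeasurableSpace Ω] (P : Measure Ω)
    (f : Ω → A) : Prop :=
  ∀ a : A, P (f ⁻¹' {a}) = (Fintype.card A : ℝ≥0∞)⁻¹

/-- A two-round decentralized secure aggregation (DSA) scheme with `K` users,
minimum number `U` of surviving users, input length `L`, first-round message length
`LX`, and second-round message length `LY`, over the finite field `F`. -/
structure DSAScheme (F : Type) [Fintype F] (K U L LX LY : ℕ) where
  /-- The underlying probability space. -/
  Ω : Type
  /-- The σ-algebra on `Ω`. -/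
  [mΩ : MeasurableSpace Ω]
  /-- The probability measure. -/
  P : Measure Ω
  /-- `P` is a probability measure. -/
  [probP : IsProbabilityMeasure P]
  /-- The (finite) alphabet of the key random variables. -/
  Zt : Type
  /-- The key alphabet is finite. -/
  [fZt : Fintype Zt]
  /-- The input random variables `W₁, …, W_K`, valued in `F^L`. -/
  W : Fin K → Ω → (Fin L → F)
  /-- The key random variables `Z₁, …, Z_K`. -/
  Z : Fin K → Ω → Zt
  /-- The first-round (deterministic) encoders: `X_k = f_k (W_k, Z_k) ∈ F^{LX}`. -/
  f : Fin K → (Fin L → F) → Zt → (Fin LX → F)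
  /-- The second-round (deterministic) encoders, one for each surviving set `𝒰₁`:
  `Y_k^{𝒰₁} = g_{k,𝒰₁} (W_k, Z_k) ∈ F^{LY}`. -/
  g : Fin K → Finset (Fin K) → (Fin L → F) → Zt → (Fin LY → F)
  /-- Each `W_k` is a (measurable) random variable. -/
  measW : ∀ k (a : Fin L → F), MeasurableSet (W k ⁻¹' {a})
  /-- Each `Z_k` is a (measurable) random variable. -/
  measZ : ∀ k (z : Zt), MeasurableSet (Z k ⁻¹' {z})
  /-- The inputs `W₁, …, W_K` are mutually independent. -/
  indepW : iIndepRV P W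
  /-- Each input is uniformly distributed on `F^L`. -/
  unifW : ∀ k, UniformRV P (W k)
  /-- The tuple of inputs `(W₁, …, W_K)` is independent of the joint key tuple
  `(Z₁, …, Z_K)`. -/
  indepWZ : IndepRV P (fun ω (k : Fin K) => W k ω) (fun ω (k : Fin K) => Z k ω)

namespace DSAScheme

variable {F : Type} [Fintype F] [AddCommMonoid F] {K U L LX LY : ℕ}

/-- The first-round message of user `k`. -/
def X (𝓢 : DSAScheme F K U L LX LY) (k : Fin K) (ω : 𝓢.Ω) : Fin LX → F :=
  𝓢.f k (𝓢.W k ω) (𝓢.Z k ω)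

/-- The second-round message of user `k` when the first-round surviving set is `U1`. -/
def Y (𝓢 : DSAScheme F K U L LX LY) (U1 : Finset (Fin K)) (k : Fin K) (ω : 𝓢.Ω) :
    Fin LY → F :=
  𝓢.g k U1 (𝓢.W k ω) (𝓢.Z k ω)

/-- Correctness: for all surviving sets `𝒰₂ ⊆ 𝒰₁` with `|𝒰₂| ≥ U` and every user
`u ∈ 𝒰₂`, there is a deterministic decoder recovering `∑_{k ∈ 𝒰₁} W_k` almost surely
from `(X_k)_{k ∈ 𝒰₁ \ {u}}`, `(Y_k^{𝒰₁})_{k ∈ 𝒰₂ \ {u}}`, `W_u` and `Z_u`. -/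
def Correct (𝓢 : DSAScheme F K U L LX LY) : Prop :=
  ∀ U1 U2 : Finset (Fin K), U2 ⊆ U1 → U ≤ U2.card → ∀ u ∈ U2,
    ∃ d : ({k // k ∈ U1.erase u} → (Fin LX → F)) →
          ({k // k ∈ U2.erase u} → (Fin LY → F)) →
          (Fin L → F) → 𝓢.Zt → (Fin L → F),
      ∀ᵐ ω ∂𝓢.P,
        d (fun k => 𝓢.X k.1 ω) (fun k => 𝓢.Y U1 k.1 ω) (𝓢.W u ω) (𝓢.Z u ω)
          = ∑ k ∈ U1, 𝓢.W k ω

/-- Security against `T` colluding users: for every surviving set `𝒰₁` with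
`|𝒰₁| ≥ U`, every colluding set `𝒯` with `|𝒯| ≤ T` and every user `u`, the tuple
`((X_k)_{k ≠ u}, (Y_k^{𝒰₁})_{k ∈ 𝒰₁ \ {u}})` is conditionally independent of
`(W₁, …, W_K)` given `(∑_{k ∈ 𝒰₁} W_k, (W_k, Z_k)_{k ∈ 𝒯 ∪ {u}})`. -/
def Secure (𝓢 : DSAScheme F K U L LX LY) (T : ℕ) : Prop :=
  letI : MeasurableSpace 𝓢.Ω := 𝓢.mΩ
  ∀ U1 : Finset (Fin K), U ≤ U1.card →
  ∀ 𝒯 : Finset (Fin K), 𝒯.card ≤ T →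
  ∀ u : Fin K,
    CondIndepRV 𝓢.P
      (fun ω => ((fun k : {k : Fin K // k ≠ u} => 𝓢.X k.1 ω),
                 (fun k : {k // k ∈ U1.erase u} => 𝓢.Y U1 k.1 ω)))
      (fun ω (k : Fin K) => 𝓢.W k ω)
      (fun ω => (∑ k ∈ U1, 𝓢.W k ω,
                 fun k : {k // k ∈ insert u 𝒯} => (𝓢.W k.1 ω, 𝓢.Z k.1 ω)))

end DSAScheme

lemma exists_measure_preimage_singleton_ne_zero {Ω β : Type*} [MeasurableSpace Ω]
    {P : Measure Ω} [NeZero P] [Countable β] (f : Ω → β) : ∃ b, P (f ⁻¹' {b}) ≠ 0 := by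
  by_contra! h
  have hnull : P (⋃ b, f ⁻¹' {b}) = 0 := measure_iUnion_null h
  rw [← Set.preimage_iUnion, Set.iUnion_of_singleton, Set.preimage_univ,
    Measure.measure_univ_eq_zero] at hnull
  exact NeZero.ne P hnull

lemma CondIndepRV.measure_inter_ne_zero {Ω A B C : Type*} [MeasurableSpace Ω] {P : Measure Ω}
    {f : Ω → A} {g : Ω → B} {h : Ω → C} (hfgh : CondIndepRV P f g h) {a : A} {b : B} {c : C}
    (hf : P (f ⁻¹' {a} ∩ h ⁻¹' {c}) ≠ 0) (hg : P (g ⁻¹' {b} ∩ h ⁻¹' {c}) ≠ 0) :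
    P (f ⁻¹' {a} ∩ g ⁻¹' {b} ∩ h ⁻¹' {c}) ≠ 0 := by
  intro h0
  have hprod := hfgh a b c
  rw [h0, zero_mul] at hprod
  exact mul_ne_zero hf hg hprod.symm

namespace DSAScheme

attribute [local instance] DSAScheme.mΩ DSAScheme.probP DSAScheme.fZt

variable {F : Type} [Fintype F] {K U L LX LY : ℕ} (𝓢 : DSAScheme F K U L LX LY)

lemma measure_inputs_eq_ne_zero (v : Fin K → Fin L → F) :
    𝓢.P ((fun ω k => 𝓢.W k ω) ⁻¹' {v}) ≠ 0 := by
  have hv : (fun ω k => 𝓢.W k ω) ⁻¹' {v} = ⋂ k, 𝓢.W k ⁻¹' {v k} := by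
    ext ω
    simp [funext_iff]
  rw [hv, 𝓢.indepW v, Finset.prod_ne_zero_iff]
  intro k _
  rw [𝓢.unifW k (v k)]
  exact ENNReal.inv_ne_zero.2 (ENNReal.natCast_ne_top _)

lemma measure_inputs_keys_eq_ne_zero (v : Fin K → Fin L → F) {z : Fin K → 𝓢.Zt}
    (hz : 𝓢.P ((fun ω k => 𝓢.Z k ω) ⁻¹' {z}) ≠ 0) :
    𝓢.P ((fun ω k => 𝓢.W k ω) ⁻¹' {v} ∩ (fun ω k => 𝓢.Z k ω) ⁻¹' {z}) ≠ 0 := by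
  rw [𝓢.indepWZ v z]
  exact mul_ne_zero (𝓢.measure_inputs_eq_ne_zero v) hz

variable {𝓢} in
lemma Correct.exists_ae_sum_eq_of_view [AddCommMonoid F] (hC : 𝓢.Correct) {U1 U2 : Finset (Fin K)}
    (hU21 : U2 ⊆ U1) (hU : U ≤ #U2) {u : Fin K} (hu : u ∈ U2) (x : Fin K → Fin LX → F)
    (w : Fin K → Fin L → F) (z : Fin K → 𝓢.Zt) :
    ∃ σ, ∀ᵐ ω ∂𝓢.P, (∀ k ∈ U1.erase u, 𝓢.X k ω = x k) →
      (∀ k ∈ U2, 𝓢.W k ω = w k ∧ 𝓢.Z k ω = z k) → ∑ k ∈ U1, 𝓢.W k ω = σ := by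
  obtain ⟨d, hd⟩ := hC U1 U2 hU21 hU u hu
  refine ⟨d (fun k => x k) (fun k => 𝓢.g k U1 (w k) (z k)) (w u) (z u), ?_⟩
  filter_upwards [hd] with ω hω hX hWZ
  have hY : ∀ k ∈ U2, 𝓢.Y U1 k ω = 𝓢.g k U1 (w k) (z k) := fun k hk => by
    simp only [Y, hWZ k hk]
  rw [← hω, (hWZ u hu).1, (hWZ u hu).2]
  congr 1
  · funext k
    exact hX k k.2
  · funext k
    exact hY k (mem_of_mem_erase k.2)

variable {𝓢} in
lemma Secure.measure_messages_eq_and_inputs_eq_zero_ne_zero [AddCommMonoid F] {T : ℕ}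
    (hS : 𝓢.Secure T) {U1 U2 : Finset (Fin K)} (hU1 : U ≤ #U1) {u : Fin K} (hu : u ∈ U2)
    (hT : #U2 ≤ T + 1) {w : Fin K → Fin L → F} (hw : ∀ k ∈ U2, w k = 0)
    (hwU1 : ∑ k ∈ U1, w k = 0) {z : Fin K → 𝓢.Zt}
    (hz : 𝓢.P ((fun ω k => 𝓢.Z k ω) ⁻¹' {z}) ≠ 0) :
    𝓢.P {ω | (∀ k ≠ u, 𝓢.X k ω = 𝓢.f k (w k) (z k)) ∧ (∀ k, 𝓢.W k ω = 0) ∧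
      ∀ k ∈ U2, 𝓢.Z k ω = z k} ≠ 0 := by
  have hsec := hS U1 hU1 (U2.erase u) (by rw [card_erase_of_mem hu]; omega) u
  have hmem : ∀ k : {k // k ∈ insert u (U2.erase u)}, k.1 ∈ U2 := fun k => by
    simpa only [insert_erase hu] using k.2
  refine fun h0 => hsec.measure_inter_ne_zero
      (a := (fun k => 𝓢.f k (w k) (z k), fun k => 𝓢.g k U1 (w k) (z k))) (b := 0)
      (c := (0, fun k => (0, z k))) ?_ ?_ (measure_mono_null ?_ h0)
  · refine fun h0 => 𝓢.measure_inputs_keys_eq_ne_zero w hz (measure_mono_null ?_ h0)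
    rintro ω ⟨hWω, hZω⟩
    have hW : ∀ k, 𝓢.W k ω = w k := fun k => congrFun hWω k
    have hZ : ∀ k, 𝓢.Z k ω = z k := fun k => congrFun hZω k
    refine ⟨Prod.ext (funext fun k => by simp only [X, hW, hZ])
      (funext fun k => by simp only [Y, hW, hZ]), Prod.ext ?_ (funext fun k => ?_)⟩
    · simp only [hW]
      exact hwU1
    · simp only [hW, hZ, hw k (hmem k)]
  · refine fun h0 => 𝓢.measure_inputs_keys_eq_ne_zero 0 hz (measure_mono_null ?_ h0)
    rintro ω ⟨hWω, hZω⟩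
    have hW : ∀ k, 𝓢.W k ω = 0 := fun k => congrFun hWω k
    have hZ : ∀ k, 𝓢.Z k ω = z k := fun k => congrFun hZω k
    exact ⟨hWω, Prod.ext (sum_eq_zero fun k _ => hW k) (funext fun k => by simp only [hW, hZ])⟩
  · rintro ω ⟨⟨hM, hW⟩, hC⟩
    refine ⟨fun k hk => congrFun (congrArg Prod.fst hM) ⟨k, hk⟩, fun k => congrFun hW k,
      fun k hk => congrArg Prod.snd (congrFun (congrArg Prod.snd hC) ⟨k, ?_⟩)⟩
    rwa [insert_erase hu]

theorem not_correct_and_secure [AddCommGroup F] {T : ℕ} {U2 : Finset (Fin K)} {u a b : Fin K}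
    (hu : u ∈ U2) (ha : a ∉ U2) (hb : b ∉ U2) (hab : a ≠ b) (hU : U ≤ #U2) (hT : #U2 ≤ T + 1)
    {δ : Fin L → F} (hδ : δ ≠ 0) : ¬ (𝓢.Correct ∧ 𝓢.Secure T) := by
  rintro ⟨hC, hS⟩
  set U1' := insert b U2
  set U1 := insert a U1'
  set w : Fin K → Fin L → F := Pi.single a δ - Pi.single b δ
  have hw : ∀ k ∈ U2, w k = 0 := fun k hk => by
    simp [w, ne_of_mem_of_not_mem hk ha, ne_of_mem_of_not_mem hk hb]
  have hwU1' : ∑ k ∈ U1', w k = -δ := by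
    simp [w, U1', sum_sub_distrib, sum_pi_single', hab, ha]
  have hwU1 : ∑ k ∈ U1, w k = 0 := by
    simp [w, U1, U1', sum_sub_distrib, sum_pi_single']
  obtain ⟨z, hz⟩ := exists_measure_preimage_singleton_ne_zero (P := 𝓢.P) (fun ω k => 𝓢.Z k ω)
  obtain ⟨σ, hσ⟩ := hC.exists_ae_sum_eq_of_view (subset_insert b U2) hU hu
    (fun k => 𝓢.f k (w k) (z k)) 0 z
  have hσw : σ = -δ := by
    obtain ⟨ω, ⟨hWω, hZω⟩, hω⟩ := Measure.exists_mem_of_measure_ne_zero_of_ae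
      (𝓢.measure_inputs_keys_eq_ne_zero w hz) (ae_restrict_of_ae hσ)
    have hW : ∀ k, 𝓢.W k ω = w k := fun k => congrFun hWω k
    have hZ : ∀ k, 𝓢.Z k ω = z k := fun k => congrFun hZω k
    rw [← hω (fun k _ => by simp only [X, hW, hZ]) (fun k hk => ⟨(hW k).trans (hw k hk), hZ k⟩)]
    simp only [hW]
    exact hwU1'
  have hσ0 : σ = 0 := by
    have hU1 : U ≤ #U1 := hU.trans (card_le_card ((subset_insert b U2).trans (subset_insert a U1')))
    obtain ⟨ω, ⟨hX, hW, hZ⟩, hω⟩ := Measure.exists_mem_of_measure_ne_zero_of_ae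
      (hS.measure_messages_eq_and_inputs_eq_zero_ne_zero hU1 hu hT hw hwU1 hz)
      (ae_restrict_of_ae hσ)
    rw [← hω (fun k hk => hX k (ne_of_mem_erase hk)) (fun k hk => ⟨hW k, hZ k hk⟩)]
    exact sum_eq_zero fun k _ => hW k
  exact hδ (neg_eq_zero.1 (hσw.symm.trans hσ0))

end DSAScheme

theorem dsa_infeasibility_general
    (F : Type) [Field F] [Fintype F] (K U T L LX LY : ℕ)
    (hK : 3 ≤ K) (hT : T ≤ K - 3) (hU1 : 1 ≤ U)
    (hUT : U ≤ T + 1) (hL : 1 ≤ L) :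
    ¬ ∃ 𝓢 : DSAScheme F K U L LX LY, 𝓢.Correct ∧ 𝓢.Secure T := by
  rintro ⟨𝓢, h𝓢⟩
  let a : Fin K := ⟨0, by omega⟩
  let b : Fin K := ⟨1, by omega⟩
  have hab : a ≠ b := by simp [a, b]
  obtain ⟨U2, hU2, hcard⟩ := exists_subset_card_eq (s := (univ.erase a).erase b) (n := U) (by
    rw [card_erase_of_mem (mem_erase.2 ⟨hab.symm, mem_univ b⟩), card_erase_of_mem (mem_univ a),
      card_univ, Fintype.card_fin]
    omega)
  obtain ⟨u, hu⟩ := card_pos.1 (hcard ▸ hU1)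
  have : Nonempty (Fin L) := ⟨⟨0, hL⟩⟩
  obtain ⟨δ, hδ⟩ := exists_ne (0 : Fin L → F)
  exact 𝓢.not_correct_and_secure hu
    (fun ha => notMem_erase a univ (mem_of_mem_erase (hU2 ha)))
    (fun hb => notMem_erase b _ (hU2 hb)) hab hcard.ge (by omega) hδ h𝓢

/-- **Infeasibility of decentralized secure aggregation when `U ≤ T + 1`.**
For a finite field `F` with `q` elements, `K ≥ 3`, `0 ≤ T ≤ K - 3`, `1 ≤ U ≤ K - 1`
with `U ≤ T + 1`, and input length `L ≥ 1`, there is no two-round DSA scheme that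
simultaneously satisfies the correctness constraint and the security constraint with
collusion parameter `T`: the optimal rate region is empty. -/
theorem dsa_infeasibility
    (F : Type) [Field F] [Fintype F] (q K U T L LX LY : ℕ)
    (hq : Fintype.card F = q)
    (hK : 3 ≤ K) (hT : T ≤ K - 3) (hU1 : 1 ≤ U) (hUK : U ≤ K - 1)
    (hUT : U ≤ T + 1) (hL : 1 ≤ L) :
    ¬ ∃ 𝓢 : DSAScheme F K U L LX LY, 𝓢.Correct ∧ 𝓢.Secure T :=
  dsa_infeasibility_general F K U T L LX LY hK hT hU1 hUT hL
end

section
/- (Security of the general DSA scheme.) Let F be a finite field with q elements, let T+1 < U ≤ K−1 with K ≥ 3, and let α ∈ F^{U×K} be a (T+1)-private MDS matrix. On a probability space Ω let W₁,…,W_K, N₁,…,N_K, S₁,…,S_K be mutually independent random variables with each W_k and N_k uniform on F^{U−T−1} and each S_k uniform on F^{T+1}. Define the shares [Q_i]_k = (N_i, S_i) · α_k, the keys Z_k = (N_k, ([Q_i]_k)_{i∈{1,…,K}}), the first-round messages X_k = W_k + N_k, and, for 𝒰₁ ⊆ {1,…,K} with |𝒰₁| ≥ U, the second-round messages Y_k^{𝒰₁}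 = ∑_{i∈𝒰₁} [Q_i]_k. Then for every u ∈ {1,…,K}, every 𝒯 ⊆ {1,…,K} with |𝒯| ≤ T, and every 𝒰₁ ⊆ {1,…,K} with |𝒰₁| ≥ U, the random tuple ((X_k)_{k∈{1,…,K}\{u}}, (Y_k^{𝒰₁})_{k∈𝒰₁\{u}}) is conditionally independent of the input tuple (W₁,…,W_K) given the σ-algebra generated by (∑_{k∈𝒰₁} W_k, (W_k, Z_k)_{k∈𝒯∪{u}}). -/
open MeasureTheory Finset
open scoped ENNReal

/-- `α ∈ F^{U×K}` is an MDS matrix: every `U×U` submatrix formed by `U` distinct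
columns is invertible. -/
def IsMDS {F : Type*} [Field F] {U K : ℕ} (α : Matrix (Fin U) (Fin K) F) : Prop :=
  ∀ c : Fin U → Fin K, Function.Injective c →
    (Matrix.of fun i j : Fin U => α i (c j)).det ≠ 0

/-- `α ∈ F^{U×K}` is a `(T+1)`-private MDS matrix: it is MDS, and in addition every
`(T+1)×(T+1)` submatrix formed by `T+1` distinct columns of its last `T+1` rows is
invertible. -/
def IsPrivateMDS {F : Type*} [Field F] {U K : ℕ} (T : ℕ) (hTU : T + 1 ≤ U)
    (α : Matrix (Fin U) (Fin K) F) : Prop :=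
  IsMDS α ∧
    ∀ c : Fin (T + 1) → Fin K, Function.Injective c →
      (Matrix.of fun i j : Fin (T + 1) =>
        α ⟨U - (T + 1) + i.1, by have := i.isLt; omega⟩ (c j)).det ≠ 0

/-- The scalar share `[Q_i]_k`: the inner product of the concatenated row vector
`(N_i, S_i) ∈ F^U` with the `k`-th column of `α`. -/
def share {F : Type*} [Field F] {U K T : ℕ} (h : U - T - 1 + (T + 1) = U)
    (α : Matrix (Fin U) (Fin K) F)
    (n : Fin (U - T - 1) → F) (s : Fin (T + 1) → F) (k : Fin K) : F :=
  ∑ j : Fin U, Fin.append n s (Fin.cast h.symm j) * α j k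

/-!
Everything is a function of the uniformly distributed state `(W, N, S)`, so conditional
independence reduces to counting states: it suffices that for any two input vectors `W`, `W'`
compatible with the side information there is an injection between their fibres preserving the
side information and the transcript. Such a map is the translation
`W ↦ W - δ, N ↦ N + δ, S_i ↦ S_i + L δ_i` with `δ = W - W'`, where the linear map `L` makes
`(d, L d) · α_k = 0` on the at most `T + 1` columns `k ∈ 𝒯 ∪ {u}`; it exists because the
corresponding `(T+1) × (T+1)` block of the last rows of `α` is invertible. The first-round
messages `W_k + N_k` and the colluders' keys are unchanged, and since `∑_{k ∈ 𝒰₁} δ_k = 0` the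
masks cancel in every aggregate `Y_k`.
-/

theorem UniformRV.measure_preimage {Ω V : Type*} [MeasurableSpace Ω] [Fintype V]
    {P : Measure Ω} [IsProbabilityMeasure P] {X : Ω → V} (hX : UniformRV P X) (s : Finset V) :
    P (X ⁻¹' s) = #s / Fintype.card V := by
  classical
  have hle (t : Finset V) : P (X ⁻¹' t) ≤ #t / Fintype.card V :=
    calc P (X ⁻¹' t) = P (⋃ v ∈ t, X ⁻¹' {v}) := by simp
      _ ≤ ∑ v ∈ t, P (X ⁻¹' {v}) := measure_biUnion_finset_le _ _
      _ = #t / Fintype.card V := by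
        rw [sum_congr rfl fun v _ => hX v]; simp [div_eq_mul_inv]
  have : Nonempty V := (nonempty_of_isProbabilityMeasure P).map X
  have hV : (Fintype.card V : ℝ≥0∞) ≠ 0 := Nat.cast_ne_zero.2 Fintype.card_ne_zero
  have htotal : (#s / Fintype.card V + #sᶜ / Fintype.card V : ℝ≥0∞) = 1 := by
    rw [ENNReal.div_add_div_same, ← Nat.cast_add, card_add_card_compl,
      ENNReal.div_self hV (ENNReal.natCast_ne_top _)]
  refine le_antisymm (hle s) ?_
  refine (ENNReal.add_le_add_iff_right (ENNReal.div_ne_top (ENNReal.natCast_ne_top #sᶜ) hV)).1 ?_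
  calc #s / Fintype.card V + #sᶜ / Fintype.card V = P Set.univ := by rw [htotal, measure_univ]
    _ ≤ P (X ⁻¹' s) + P (X ⁻¹' s)ᶜ := measure_univ_le_add_compl _
    _ ≤ P (X ⁻¹' s) + #sᶜ / Fintype.card V := by
      gcongr
      rw [← Set.preimage_compl, ← coe_compl]
      exact hle _

theorem card_filter_mul_card_filter_eq_of_exists_injective {V B : Type*} [Fintype V]
    [DecidableEq B] (γ : V → B) (PA PC : V → Prop) [DecidablePred PA] [DecidablePred PC]
    (hmove : ∀ b b', (∃ v, γ v = b ∧ PC v) → (∃ v, γ v = b' ∧ PC v) →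
      ∃ e : V → V, Function.Injective e ∧
        ∀ v, γ v = b → PC v → γ (e v) = b' ∧ PC (e v) ∧ (PA (e v) ↔ PA v))
    (b : B) :
    #{v | (PA v ∧ γ v = b) ∧ PC v} * #{v | PC v} =
      #{v | PA v ∧ PC v} * #{v | γ v = b ∧ PC v} := by
  set f : B → ℕ := fun b => #{v | (PA v ∧ γ v = b) ∧ PC v}
  set g : B → ℕ := fun b => #{v | γ v = b ∧ PC v}
  have hmono (b₁ b₂) (hb₁ : ∃ v, γ v = b₁ ∧ PC v) (hb₂ : ∃ v, γ v = b₂ ∧ PC v) :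
      f b₁ ≤ f b₂ ∧ g b₁ ≤ g b₂ := by
    obtain ⟨e, he, hmaps⟩ := hmove b₁ b₂ hb₁ hb₂
    constructor
    · refine card_le_card_of_injOn e (fun v hv => ?_) he.injOn
      simp only [coe_filter, mem_univ, true_and, Set.mem_ofPred_eq] at hv ⊢
      obtain ⟨hγ, hPC, hPA⟩ := hmaps v hv.1.2 hv.2
      exact ⟨⟨hPA.2 hv.1.1, hγ⟩, hPC⟩
    · refine card_le_card_of_injOn e (fun v hv => ?_) he.injOn
      simp only [coe_filter, mem_univ, true_and, Set.mem_ofPred_eq] at hv ⊢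
      exact (hmaps v hv.1 hv.2).imp_right And.left
  have hempty (b₁) (hb₁ : ¬∃ v, γ v = b₁ ∧ PC v) : f b₁ = 0 ∧ g b₁ = 0 := by
    simp only [not_exists, not_and] at hb₁
    constructor <;> simp only [f, g, card_eq_zero, filter_eq_empty_iff] <;> grind
  have hcross (b') : f b * g b' = f b' * g b := by
    by_cases hb : ∃ v, γ v = b ∧ PC v
    · by_cases hb' : ∃ v, γ v = b' ∧ PC v
      · rw [(hmono b b' hb hb').1.antisymm (hmono b' b hb' hb).1,
          (hmono b b' hb hb').2.antisymm (hmono b' b hb' hb).2]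
      · simp [hempty b' hb']
    · simp [hempty b hb]
  have hfiber (Q : V → Prop) [DecidablePred Q] :
      #{v | Q v} = ∑ b ∈ univ.image γ, #{v | γ v = b ∧ Q v} := by
    rw [card_eq_sum_card_fiberwise (fun v _ => mem_image_of_mem γ (mem_univ v))]
    simp only [filter_filter, and_comm]
  calc f b * #{v | PC v} = ∑ b' ∈ univ.image γ, f b' * g b := by
        rw [hfiber, mul_sum]; exact sum_congr rfl fun b' _ => hcross b'
    _ = #{v | PA v ∧ PC v} * g b := by
        rw [hfiber, sum_mul]
        refine sum_congr rfl fun b' _ => ?_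
        simp only [f, and_assoc, and_left_comm (a := PA _)]

theorem condIndepRV_comp_of_uniform {Ω V A B C : Type*} [MeasurableSpace Ω] [Fintype V]
    {P : Measure Ω} [IsProbabilityMeasure P] {X : Ω → V} (hX : UniformRV P X)
    (φ : V → A) (γ : V → B) (η : V → C)
    (hmove : ∀ c b b', (∃ v, γ v = b ∧ η v = c) → (∃ v, γ v = b' ∧ η v = c) →
      ∃ e : V → V, Function.Injective e ∧
        ∀ v, γ v = b → η v = c → γ (e v) = b' ∧ η (e v) = c ∧ φ (e v) = φ v) :
    CondIndepRV P (φ ∘ X) (γ ∘ X) (η ∘ X) := by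
  classical
  intro a b c
  have hcount := card_filter_mul_card_filter_eq_of_exists_injective γ (φ · = a) (η · = c)
    (fun b b' hb hb' => (hmove c b b' hb hb').imp fun e ⟨he, hmaps⟩ =>
      ⟨he, fun v hγ hη => (hmaps v hγ hη).imp_right (And.imp_right fun h => by rw [h])⟩) b
  have hP (p : V → Prop) : P (X ⁻¹' {v | p v}) = #{v | p v} / Fintype.card V := by
    rw [← hX.measure_preimage, coe_filter_univ]
  change P (X ⁻¹' {v | (φ v = a ∧ γ v = b) ∧ η v = c}) * P (X ⁻¹' {v | η v = c}) =
    P (X ⁻¹' {v | φ v = a ∧ η v = c}) * P (X ⁻¹' {v | γ v = b ∧ η v = c})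
  simp only [hP, div_eq_mul_inv, mul_mul_mul_comm _ (Fintype.card V : ℝ≥0∞)⁻¹, ← Nat.cast_mul]
  convert congrArg (fun n : ℕ => (n : ℝ≥0∞) * _) hcount

section Share

variable {F : Type*} [Field F] {U K T : ℕ} (h : U - T - 1 + (T + 1) = U)
  (α : Matrix (Fin U) (Fin K) F)

theorem share_eq (n : Fin (U - T - 1) → F) (s : Fin (T + 1) → F) (k : Fin K) :
    share h α n s k =
      ∑ r, n r * α (Fin.cast h (Fin.castAdd (T + 1) r)) k +
        ∑ l, s l * α (Fin.cast h (Fin.natAdd (U - T - 1) l)) k := by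
  rw [share, ← (finCongr h).sum_comp, Fin.sum_univ_add]
  simp

theorem share_add (n n' : Fin (U - T - 1) → F) (s s' : Fin (T + 1) → F) (k : Fin K) :
    share h α (n + n') (s + s') k = share h α n s k + share h α n' s' k := by
  simp only [share_eq, Pi.add_apply, add_mul, sum_add_distrib]
  ring

theorem share_zero (k : Fin K) : share h α 0 0 k = 0 := by
  simp [share_eq]

theorem share_sum {ι : Type*} (I : Finset ι) (n : ι → Fin (U - T - 1) → F)
    (s : ι → Fin (T + 1) → F) (k : Fin K) :
    share h α (∑ i ∈ I, n i) (∑ i ∈ I, s i) k = ∑ i ∈ I, share h α (n i) (s i) k := by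
  induction I using Finset.cons_induction with
  | empty => simp [share_zero]
  | cons i I hi ih => simp [sum_cons, share_add, ih]

theorem sum_share_add_of_sum_eq_zero {G : Type*}
    [FunLike G (Fin (U - T - 1) → F) (Fin (T + 1) → F)]
    [AddMonoidHomClass G (Fin (U - T - 1) → F) (Fin (T + 1) → F)] (L : G) {ι : Type*}
    (I : Finset ι) (n δ : ι → Fin (U - T - 1) → F) (s : ι → Fin (T + 1) → F)
    (hδ : ∑ i ∈ I, δ i = 0) (k : Fin K) :
    ∑ i ∈ I, share h α (n i + δ i) (s i + L (δ i)) k = ∑ i ∈ I, share h α (n i) (s i) k := by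
  simp only [share_add, sum_add_distrib, ← share_sum, ← map_sum, hδ, map_zero, share_zero,
    add_zero]

theorem IsPrivateMDS.exists_linearMap_share_eq_zero {hTU : T + 1 ≤ U}
    (hα : IsPrivateMDS T hTU α) {D : Finset (Fin K)} (hD : #D ≤ T + 1) (hK : T + 1 ≤ K) :
    ∃ L : (Fin (U - T - 1) → F) →ₗ[F] (Fin (T + 1) → F),
      ∀ d, ∀ k ∈ D, share h α d (L d) k = 0 := by
  obtain ⟨D', hDD', hD'⟩ := exists_superset_card_eq hD (by simpa using hK)
  set c := D'.orderEmbOfFin hD'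
  set M : Matrix (Fin (U - T - 1)) (Fin (T + 1)) F :=
    Matrix.of fun r j => α (Fin.cast h (Fin.castAdd (T + 1) r)) (c j)
  set B : Matrix (Fin (T + 1)) (Fin (T + 1)) F :=
    Matrix.of fun l j => α (Fin.cast h (Fin.natAdd (U - T - 1) l)) (c j)
  have hB : IsUnit B.det := by
    refine isUnit_iff_ne_zero.2 (ne_of_eq_of_ne (congrArg Matrix.det ?_) (hα.2 c c.injective))
    ext l j
    simp only [B, Matrix.of_apply]
    -- the row indices agree definitionally, as `U - T - 1` and `U - (T + 1)` do
    congr 2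
  refine ⟨-Matrix.vecMulLinear (M * B⁻¹), fun d k hk => ?_⟩
  obtain ⟨j, rfl⟩ : k ∈ Set.range c := by rw [range_orderEmbOfFin]; exact hDD' hk
  have hsplit : share h α d (-(Matrix.vecMul d (M * B⁻¹))) (c j) =
      Matrix.vecMul d M j - Matrix.vecMul (Matrix.vecMul d (M * B⁻¹)) B j := by
    simp [share_eq, Matrix.vecMul, dotProduct, M, B, sub_eq_add_neg]
  simpa [Matrix.vecMul_vecMul, Matrix.nonsing_inv_mul_cancel_right _ _ hB] using hsplit

end Share

theorem uniformRV_of_indep {Ω ι A B : Type*} [MeasurableSpace Ω] [Fintype ι] [DecidableEq ι]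
    [Fintype A] [Fintype B] (P : Measure Ω) (W N : ι → Ω → A) (S : ι → Ω → B)
    (hindep : ∀ (a b : ι → A) (c : ι → B),
      P ((⋂ i, W i ⁻¹' {a i}) ∩ (⋂ i, N i ⁻¹' {b i}) ∩ ⋂ i, S i ⁻¹' {c i}) =
        (∏ i, P (W i ⁻¹' {a i})) * (∏ i, P (N i ⁻¹' {b i})) * ∏ i, P (S i ⁻¹' {c i}))
    (hW : ∀ i, UniformRV P (W i)) (hN : ∀ i, UniformRV P (N i)) (hS : ∀ i, UniformRV P (S i)) :
    UniformRV P fun ω => ((fun i => W i ω), (fun i => N i ω), (fun i => S i ω)) := by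
  rintro ⟨a, b, c⟩
  have hpre : (fun ω => ((fun i => W i ω), (fun i => N i ω), (fun i => S i ω))) ⁻¹' {(a, b, c)} =
      (⋂ i, W i ⁻¹' {a i}) ∩ (⋂ i, N i ⁻¹' {b i}) ∩ ⋂ i, S i ⁻¹' {c i} := by
    ext ω
    simp [funext_iff, and_assoc]
  simp only [UniformRV] at hW hN hS ⊢
  rw [hpre, hindep]
  simp only [hW, hN, hS, prod_const, card_univ, Fintype.card_prod, Fintype.card_fun, Nat.cast_mul,
    Nat.cast_pow]
  rw [ENNReal.mul_inv (Or.inr (ENNReal.mul_ne_top (by simp) (by simp))) (Or.inl (by simp)),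
    ENNReal.mul_inv (Or.inr (by simp)) (Or.inl (by simp)), mul_assoc]
  simp only [ENNReal.inv_pow]

-- The inputs `W`, noises `N` and secret parts `S` of all `K` users.
abbrev SchemeState (F : Type*) (K m t : ℕ) :=
  (Fin K → Fin m → F) × (Fin K → Fin m → F) × (Fin K → Fin t → F)

def mask {F : Type*} [Neg F] {K m t : ℕ} (L : (Fin m → F) → Fin t → F) (δ : Fin K → Fin m → F) :
    SchemeState F K m t :=
  (-δ, δ, fun i => L (δ i))

section Views

variable {F : Type*} [Field F] {U K T : ℕ} (h : U - T - 1 + (T + 1) = U)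
  (α : Matrix (Fin U) (Fin K) F)

def transcript (u : Fin K) (U1 : Finset (Fin K)) (v : SchemeState F K (U - T - 1) (T + 1)) :
    ({k : Fin K // k ≠ u} → Fin (U - T - 1) → F) × ({k // k ∈ U1.erase u} → F) :=
  (fun k => v.1 k.1 + v.2.1 k.1, fun k => ∑ i ∈ U1, share h α (v.2.1 i) (v.2.2 i) k.1)

def sideInfo (U1 D : Finset (Fin K)) (v : SchemeState F K (U - T - 1) (T + 1)) :
    (Fin (U - T - 1) → F) ×
      ({k // k ∈ D} → (Fin (U - T - 1) → F) × (Fin (U - T - 1) → F) × (Fin K → F)) :=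
  (∑ k ∈ U1, v.1 k, fun k => (v.1 k.1, v.2.1 k.1, fun i => share h α (v.2.1 i) (v.2.2 i) k.1))

variable {U1 : Finset (Fin K)} {δ : Fin K → Fin (U - T - 1) → F}

theorem transcript_add_mask {G : Type*} [FunLike G (Fin (U - T - 1) → F) (Fin (T + 1) → F)]
    [AddMonoidHomClass G (Fin (U - T - 1) → F) (Fin (T + 1) → F)] (L : G) (u : Fin K)
    (hδ : ∑ i ∈ U1, δ i = 0)
    (v : SchemeState F K (U - T - 1) (T + 1)) :
    transcript h α u U1 (v + mask L δ) = transcript h α u U1 v := by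
  simp only [transcript, mask, Prod.fst_add, Prod.snd_add, Pi.add_apply, Pi.neg_apply,
    sum_share_add_of_sum_eq_zero h α L U1 _ _ _ hδ, Prod.mk.injEq, and_true]
  funext k
  abel

theorem sideInfo_add_mask (L : (Fin (U - T - 1) → F) → Fin (T + 1) → F) {D : Finset (Fin K)}
    (hL : ∀ d, ∀ k ∈ D, share h α d (L d) k = 0)
    (hδU1 : ∑ i ∈ U1, δ i = 0) (hδD : ∀ k ∈ D, δ k = 0)
    (v : SchemeState F K (U - T - 1) (T + 1)) :
    sideInfo h α U1 D (v + mask L δ) = sideInfo h α U1 D v := by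
  simp only [sideInfo, mask, Prod.fst_add, Prod.snd_add, Pi.add_apply, Pi.neg_apply, share_add,
    sum_add_distrib, sum_neg_distrib, hδU1, neg_zero, add_zero]
  congr
  funext k
  simp [hδD k.1 k.2, hL _ k.1 k.2]

end Views

/-- **Security of the general DSA scheme.**
With mutually independent uniform `W_k, N_k` (on `F^{U-T-1}`) and `S_k` (on `F^{T+1}`),
shares `[Q_i]_k = (N_i, S_i) · α_k` for a `(T+1)`-private MDS matrix `α`, keys
`Z_k = (N_k, ([Q_i]_k)_{i ∈ [K]})`, first-round messages `X_k = W_k + N_k` and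
second-round messages `Y_k^{𝒰₁} = ∑_{i ∈ 𝒰₁} [Q_i]_k`, the tuple
`((X_k)_{k ≠ u}, (Y_k^{𝒰₁})_{k ∈ 𝒰₁ \ {u}})` is conditionally independent of
`(W₁, …, W_K)` given `(∑_{k ∈ 𝒰₁} W_k, (W_k, Z_k)_{k ∈ 𝒯 ∪ {u}})`, for every user `u`,
every `𝒯` with `|𝒯| ≤ T` and every `𝒰₁` with `|𝒰₁| ≥ U`. -/
theorem dsa_scheme_security
    (F : Type) [Field F] [Fintype F] (K U T : ℕ)
    (hTU : T + 1 < U) (hUK : U ≤ K - 1)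
    (Ω : Type) [MeasurableSpace Ω] (P : Measure Ω) [IsProbabilityMeasure P]
    (W N : Fin K → Ω → (Fin (U - T - 1) → F))
    (S : Fin K → Ω → (Fin (T + 1) → F))
    (hindep : ∀ (a b : Fin K → (Fin (U - T - 1) → F))
        (c : Fin K → (Fin (T + 1) → F)),
      P ((⋂ i, W i ⁻¹' {a i}) ∩ (⋂ i, N i ⁻¹' {b i}) ∩ ⋂ i, S i ⁻¹' {c i}) =
        (∏ i, P (W i ⁻¹' {a i})) * (∏ i, P (N i ⁻¹' {b i})) *
          ∏ i, P (S i ⁻¹' {c i}))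
    (hunifW : ∀ i, UniformRV P (W i))
    (hunifN : ∀ i, UniformRV P (N i))
    (hunifS : ∀ i, UniformRV P (S i))
    (α : Matrix (Fin U) (Fin K) F)
    (hα : IsPrivateMDS T (by omega) α)
    (u : Fin K) (𝒯 : Finset (Fin K)) (h𝒯 : 𝒯.card ≤ T)
    (U1 : Finset (Fin K)) :
    CondIndepRV P
      (fun ω =>
        ((fun k : {k : Fin K // k ≠ u} => W k.1 ω + N k.1 ω),
         (fun k : {k // k ∈ U1.erase u} =>
            ∑ i ∈ U1, share (by omega) α (N i ω) (S i ω) k.1)))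
      (fun ω => fun k : Fin K => W k ω)
      (fun ω =>
        (∑ k ∈ U1, W k ω,
         fun k : {k // k ∈ insert u 𝒯} =>
           (W k.1 ω,
             (N k.1 ω, fun i : Fin K => share (by omega) α (N i ω) (S i ω) k.1)))) := by
  have hm : U - T - 1 + (T + 1) = U := by omega
  have hD : #(insert u 𝒯) ≤ T + 1 := (card_insert_le u 𝒯).trans (by omega)
  obtain ⟨L, hL⟩ := hα.exists_linearMap_share_eq_zero hm α hD (by omega)
  refine condIndepRV_comp_of_uniform (uniformRV_of_indep P W N S hindep hunifW hunifN hunifS)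
    (transcript hm α u U1) Prod.fst (sideInfo hm α U1 (insert u 𝒯)) ?_
  rintro c _ _ ⟨v, rfl, hv⟩ ⟨v', rfl, hv'⟩
  have hsum : ∑ i ∈ U1, (v.1 - v'.1) i = 0 := by
    simpa [sideInfo, sum_sub_distrib, sub_eq_zero] using congrArg Prod.fst (hv.trans hv'.symm)
  have hcolluders : ∀ k ∈ insert u 𝒯, (v.1 - v'.1) k = 0 := fun k hk => by
    simpa [sideInfo, sub_eq_zero] using congrArg (fun x => (x.2 ⟨k, hk⟩).1) (hv.trans hv'.symm)
  refine ⟨(· + mask L (v.1 - v'.1)), add_left_injective _, fun x hx hxc => ⟨?_, ?_, ?_⟩⟩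
  · simp [mask, hx]
  · rw [sideInfo_add_mask hm α L hL hsum hcolluders, hxc]
  · exact transcript_add_mask hm α L u hsum x
end
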